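/- Let ξ : ℝ → ℂ satisfy the chord-arc condition with constant K > 0, and suppose ξ(α) − α is bounded on ℝ with |ξ(α) − α| ≤ M. Then for any z ∈ ℂ with dist(z, ξ(ℝ)) = d > 0 and z ∉ ℝ, the integral ∫_ℝ (ξ(α') − α')² / ((z − ξ(α'))(z − α')²) dα' converges absolutely. -/

import Mathlib

open MeasureTheory

lemma aux_integrable (c b : ℝ) (hb : b ≠ 0) :
    Integrable (fun x : ℝ => ((x - c) ^ 2 + b ^ 2)⁻¹) := by
  have h1 : Integrable (fun x : ℝ => (1 + (x / b) ^ 2)⁻¹) :=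
    integrable_inv_one_add_sq.comp_div hb
  have h2 : Integrable (fun x : ℝ => (1 + ((x - c) / b) ^ 2)⁻¹) :=
    h1.comp_sub_right c
  have h3 := h2.const_mul ((b ^ 2)⁻¹)
  refine h3.congr (Filter.Eventually.of_forall fun x => ?_)
  have hb2 : b ^ 2 ≠ 0 := pow_ne_zero _ hb
  field_simp
  ring

/-- Absolute convergence of `∫ (ξ(α')-α')²/((z-ξ(α'))(z-α')²) dα'` when `ξ - id` is bounded. -/
theorem stmt_5 (ξ : ℝ → ℂ) (hcont : Continuous ξ)
    (K : ℝ) (hK : 0 < K)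
    (hchord : ∀ α α' : ℝ, K * |α - α'| ≤ ‖ξ α - ξ α'‖)
    (M : ℝ) (hM : ∀ α : ℝ, ‖ξ α - α‖ ≤ M)
    (z : ℂ) (d : ℝ) (hd : 0 < d)
    (hdist : ∀ α : ℝ, d ≤ ‖z - ξ α‖)
    (hz : z.im ≠ 0) :
    Integrable (fun α' : ℝ => (ξ α' - α') ^ 2 / ((z - ξ α') * (z - α') ^ 2)) := by
  have hM0 : 0 ≤ M := (norm_nonneg _).trans (hM 0)
  -- dominating function
  have hdom : Integrable (fun x : ℝ => M ^ 2 / d * ((x - z.re) ^ 2 + z.im ^ 2)⁻¹) :=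
    (aux_integrable z.re z.im hz).const_mul _
  refine hdom.mono' ?_ (Filter.Eventually.of_forall fun α => ?_)
  · -- measurability
    have hne1 : ∀ α : ℝ, z - ξ α ≠ 0 := fun α => by
      intro h
      have := hdist α
      rw [h] at this
      simp at this
      linarith
    have hne2 : ∀ α : ℝ, z - (α : ℂ) ≠ 0 := fun α => by
      intro h
      have : (z - (α : ℂ)).im = 0 := by rw [h]; simp
      simp [Complex.sub_im] at this
      exact hz this
    exact (Continuous.div (by continuity)
      (by continuity)
      (fun α => mul_ne_zero (hne1 α) (pow_ne_zero _ (hne2 α)))).aestronglyMeasurable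
  · -- bound
    have hzα : ‖z - (α : ℂ)‖ ^ 2 = (α - z.re) ^ 2 + z.im ^ 2 := by
      rw [Complex.sq_norm, Complex.normSq_apply]
      simp [Complex.sub_re, Complex.sub_im]
      ring
    have hpos : (0:ℝ) < (α - z.re) ^ 2 + z.im ^ 2 := by
      positivity
    rw [norm_div, norm_mul, norm_pow, norm_pow]
    have h1 : ‖ξ α - (α : ℂ)‖ ^ 2 ≤ M ^ 2 :=
      pow_le_pow_left₀ (norm_nonneg _) (hM α) 2
    have h2 : d * ((α - z.re) ^ 2 + z.im ^ 2) ≤ ‖z - ξ α‖ * ‖z - (α:ℂ)‖ ^ 2 := by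
      have := hdist α
      have h3 : ‖z - (α:ℂ)‖ ^ 2 = (α - z.re) ^ 2 + z.im ^ 2 := hzα
      rw [h3]
      exact mul_le_mul_of_nonneg_right this hpos.le
    have hden : 0 < ‖z - ξ α‖ * ‖z - (α:ℂ)‖ ^ 2 := lt_of_lt_of_le (by positivity) h2
    calc ‖ξ α - (α:ℂ)‖ ^ 2 / (‖z - ξ α‖ * ‖z - (α:ℂ)‖ ^ 2)
        ≤ M ^ 2 / (d * ((α - z.re) ^ 2 + z.im ^ 2)) := by
          exact div_le_div₀ (by positivity) h1 (by positivity) h2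
      _ = M ^ 2 / d * ((α - z.re) ^ 2 + z.im ^ 2)⁻¹ := by
          rw [div_mul_eq_div_div, div_eq_mul_inv]
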